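/- arXiv:2302.12040 — 2 statements merged into one kernel-verified Lean document; each statement's English description precedes it below -/
import Mathlib

section
/- If K ≤ Perm(Y) is semiregular and H ≤ Perm(X) is transitive, then the partition 𝒫 = {X_y : y ∈ Y} of Z = X × Y is stable under the normalizer N of W = H ≀ K in Perm(Z): for every α ∈ N and every y ∈ Y there exists y' ∈ Y with α(X_y) = X_{y'}. Consequently, the induced map Ω : N → Perm(𝒫), sending α to the permutation of blocks X_y ↦ α(X_y), is a group homomorphism whose kernel is N ∩ S_Y(Z). -/
open Equiv

/-- The block `X_y = X × {y}` inside `Z = X × Y`. -/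
def block (X Y : Type*) (y : Y) : Set (X × Y) := {p | p.2 = y}

/-- The subgroup `S_Y(Z)` of all permutations of `Z = X × Y` stabilizing every block `X_y`. -/
def blockStab (X Y : Type*) : Subgroup (Perm (X × Y)) where
  carrier := {f | ∀ y : Y, f '' block X Y y = block X Y y}
  one_mem' := by intro y; simp
  mul_mem' := by
    intro f g hf hg y
    have hfg : ⇑(f * g) = ⇑f ∘ ⇑g := rfl
    rw [hfg, Set.image_comp, hg y, hf y]
  inv_mem' := by
    intro f hf y
    have h1 : ⇑f '' block X Y y = block X Y y := hf y
    calc ⇑f⁻¹ '' block X Y y = ⇑f⁻¹ '' (⇑f '' block X Y y) := by rw [h1]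
      _ = block X Y y := by
          rw [← Set.image_comp]
          have h2 : ⇑f⁻¹ ∘ ⇑f = id := by funext p; simp
          rw [h2, Set.image_id]

/-- For `h` a permutation of `X` and `y ∈ Y`, the permutation `h_y` of `Z = X × Y`
acting as `h` on the block `X_y` and fixing everything else. -/
noncomputable def fiberPerm (X Y : Type*) (h : Perm X) (y : Y) : Perm (X × Y) :=
  letI := Classical.decEq Y
  { toFun := fun p => if p.2 = y then (h p.1, p.2) else p
    invFun := fun p => if p.2 = y then (h.symm p.1, p.2) else p
    left_inv := fun p => by
      obtain ⟨x, y'⟩ := p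
      by_cases hp : y' = y <;> simp [hp]
    right_inv := fun p => by
      obtain ⟨x, y'⟩ := p
      by_cases hp : y' = y <;> simp [hp] }

lemma fiberPerm_apply_eq (X Y : Type*) (h : Perm X) (y : Y) (x : X) :
    fiberPerm X Y h y (x, y) = (h x, y) := by
  simp [fiberPerm]

lemma fiberPerm_apply_ne (X Y : Type*) (h : Perm X) (y : Y) (p : X × Y) (hp : p.2 ≠ y) :
    fiberPerm X Y h y p = p := by
  simp [fiberPerm, hp]

/-- The homomorphism `h ↦ h_y`. -/
noncomputable def fiberHom (X Y : Type*) (y : Y) : Perm X →* Perm (X × Y) where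
  toFun h := fiberPerm X Y h y
  map_one' := by
    refine Equiv.ext fun p => ?_
    by_cases hp : p.2 = y
    · obtain ⟨x, y'⟩ := p; subst hp; simp [fiberPerm_apply_eq]
    · simp [fiberPerm_apply_ne _ _ _ _ _ hp]
  map_mul' := by
    intro h1 h2
    refine Equiv.ext fun p => ?_
    by_cases hp : p.2 = y
    · obtain ⟨x, y'⟩ := p
      subst hp
      simp [Perm.mul_apply, fiberPerm_apply_eq]
    · simp [Perm.mul_apply, fiberPerm_apply_ne _ _ _ _ _ hp]

/-- The embedding `Λ` of permutations of `Y` into permutations of `Z = X × Y`,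
`Λ(k)(x,y) = (x, k(y))`. -/
def lamHom (X Y : Type*) : Perm Y →* Perm (X × Y) where
  toFun k := (Equiv.refl X).prodCongr k
  map_one' := Equiv.ext fun p => rfl
  map_mul' := fun k1 k2 => Equiv.ext fun p => rfl

lemma lamHom_apply (X Y : Type*) (k : Perm Y) (x : X) (y : Y) :
    lamHom X Y k (x, y) = (x, k y) := rfl

/-- The base group `B` of the wreath product: all permutations of `Z = X × Y`
stabilizing each block `X_y` and restricting to an element of `H_y` on it. -/
def baseGroup (X Y : Type*) (H : Subgroup (Perm X)) : Subgroup (Perm (X × Y)) where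
  carrier := {f | ∀ y : Y, ∃ h ∈ H, ∀ x : X, f (x, y) = (h x, y)}
  one_mem' := fun y => ⟨1, H.one_mem, fun x => rfl⟩
  mul_mem' := by
    rintro f g hf hg y
    obtain ⟨hg', hgH, hgeq⟩ := hg y
    obtain ⟨hf', hfH, hfeq⟩ := hf y
    refine ⟨hf' * hg', H.mul_mem hfH hgH, fun x => ?_⟩
    have : (f * g) (x, y) = f (g (x, y)) := rfl
    rw [this, hgeq x, hfeq (hg' x)]
    rfl
  inv_mem' := by
    rintro f hf y
    obtain ⟨h, hH, heq⟩ := hf y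
    refine ⟨h⁻¹, H.inv_mem hH, fun x => ?_⟩
    have h1 : f ((h⁻¹ : Perm X) x, y) = (x, y) := by
      rw [heq]
      simp
    calc f⁻¹ (x, y) = f⁻¹ (f ((h⁻¹ : Perm X) x, y)) := by rw [h1]
      _ = ((h⁻¹ : Perm X) x, y) := by simp

lemma mem_baseGroup_iff (X Y : Type*) (H : Subgroup (Perm X)) (f : Perm (X × Y)) :
    f ∈ baseGroup X Y H ↔ ∀ y : Y, ∃ h ∈ H, ∀ x : X, f (x, y) = (h x, y) := Iff.rfl

lemma lam_conj_base (X Y : Type*) {H : Subgroup (Perm X)} (k : Perm Y) {b : Perm (X × Y)}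
    (hb : b ∈ baseGroup X Y H) : (lamHom X Y k)⁻¹ * b * lamHom X Y k ∈ baseGroup X Y H := by
  intro y
  obtain ⟨h, hH, heq⟩ := hb (k y)
  refine ⟨h, hH, fun x => ?_⟩
  have h2 : ((lamHom X Y k)⁻¹ : Perm (X × Y)) (h x, k y) = (h x, y) := by
    have h3 : (lamHom X Y k) (h x, y) = (h x, k y) := rfl
    rw [← h3]
    simp
  calc ((lamHom X Y k)⁻¹ * b * lamHom X Y k) (x, y)
      = (lamHom X Y k)⁻¹ (b ((lamHom X Y k) (x, y))) := rfl
    _ = (lamHom X Y k)⁻¹ (b (x, k y)) := rfl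
    _ = (lamHom X Y k)⁻¹ (h x, k y) := by rw [heq x]
    _ = (h x, y) := h2

/-- The unrestricted wreath product `W = H ≀ K ≤ Perm(X × Y)`, namely the
internal product `Λ(K)·B`. -/
def wreath (X Y : Type*) (H : Subgroup (Perm X)) (K : Subgroup (Perm Y)) :
    Subgroup (Perm (X × Y)) where
  carrier := {w | ∃ k ∈ K, ∃ b ∈ baseGroup X Y H, w = lamHom X Y k * b}
  one_mem' := ⟨1, K.one_mem, 1, (baseGroup X Y H).one_mem, by simp⟩
  mul_mem' := by
    rintro w1 w2 ⟨k1, hk1, b1, hb1, rfl⟩ ⟨k2, hk2, b2, hb2, rfl⟩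
    refine ⟨k1 * k2, K.mul_mem hk1 hk2, ((lamHom X Y k2)⁻¹ * b1 * lamHom X Y k2) * b2,
      (baseGroup X Y H).mul_mem (lam_conj_base X Y k2 hb1) hb2, ?_⟩
    rw [map_mul]
    group
  inv_mem' := by
    rintro w ⟨k, hk, b, hb, rfl⟩
    refine ⟨k⁻¹, K.inv_mem hk, (lamHom X Y k⁻¹)⁻¹ * b⁻¹ * lamHom X Y k⁻¹,
      lam_conj_base X Y k⁻¹ ((baseGroup X Y H).inv_mem hb), ?_⟩
    rw [map_inv]
    group

lemma mem_wreath_iff (X Y : Type*) (H : Subgroup (Perm X)) (K : Subgroup (Perm Y))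
    (w : Perm (X × Y)) :
    w ∈ wreath X Y H K ↔ ∃ k ∈ K, ∃ b ∈ baseGroup X Y H, w = lamHom X Y k * b := Iff.rfl

/-- The image of the (right) regular representation of a group `K` in `Perm K`. -/
def rightRegular (K : Type*) [Group K] : Subgroup (Perm K) where
  carrier := Set.range (fun k : K => Equiv.mulRight k)
  one_mem' := ⟨1, by ext x; simp⟩
  mul_mem' := by
    rintro _ _ ⟨a, rfl⟩ ⟨b, rfl⟩
    exact ⟨b * a, by ext x; simp [mul_assoc]⟩
  inv_mem' := by
    rintro _ ⟨a, rfl⟩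
    exact ⟨a⁻¹, by ext x; simp⟩

/-- The homomorphism `Γ : Aut(K) → Perm(X × K)`, `Γ(γ)(x,k) = (x, γ(k))`. -/
def gammaHom (X K : Type*) [Group K] : MulAut K →* Perm (X × K) where
  toFun γ := (Equiv.refl X).prodCongr γ.toEquiv
  map_one' := Equiv.ext fun p => rfl
  map_mul' := fun γ1 γ2 => Equiv.ext fun p => rfl

lemma gammaHom_apply (X K : Type*) [Group K] (γ : MulAut K) (x : X) (k : K) :
    gammaHom X K γ (x, k) = (x, γ k) := rfl

/-- The homomorphism `m ↦ m*` from `Perm X` to `Perm (X × K)`, `m*(x,k) = (m(x), k)`. -/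
def mstarHom (X K : Type*) : Perm X →* Perm (X × K) where
  toFun m := m.prodCongr (Equiv.refl K)
  map_one' := Equiv.ext fun p => rfl
  map_mul' := fun m1 m2 => Equiv.ext fun p => rfl

lemma mstarHom_apply (X K : Type*) (m : Perm X) (x : X) (k : K) :
    mstarHom X K m (x, k) = (m x, k) := rfl

/-! Two points of `X × Y` lie in the same block iff some element of `W` with a fixed point
maps one to the other: by semiregularity of `K` such an element moves no block, and when `Y` has
a second point, `h_y` with `h ∈ H` fixes the blocks other than `X_y`, so transitivity of `H`
connects any two points of `X_y`. This relation is defined by `W` alone, hence preserved by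
conjugation with elements of the normalizer. -/

open scoped Pointwise

section Wreath

variable {X Y : Type*} {H : Subgroup (Perm X)} {K : Subgroup (Perm Y)}

lemma baseGroup_apply_snd {b : Perm (X × Y)} (hb : b ∈ baseGroup X Y H) (p : X × Y) :
    (b p).2 = p.2 := by
  obtain ⟨x, y⟩ := p
  obtain ⟨h, -, hb⟩ := hb y
  rw [hb x]

lemma exists_wreath_apply_snd {w : Perm (X × Y)} (hw : w ∈ wreath X Y H K) :
    ∃ k ∈ K, ∀ p : X × Y, (w p).2 = k p.2 := by
  obtain ⟨k, hk, b, hb, rfl⟩ := hw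
  exact ⟨k, hk, fun p => congrArg k (baseGroup_apply_snd hb p)⟩

lemma wreath_apply_snd_of_apply_eq (hsemi : ∀ k ∈ K, (∃ y : Y, k y = y) → k = 1)
    {w : Perm (X × Y)} (hw : w ∈ wreath X Y H K) {z : X × Y} (hz : w z = z) (p : X × Y) :
    (w p).2 = p.2 := by
  obtain ⟨k, hk, hwk⟩ := exists_wreath_apply_snd hw
  have hk1 : k = 1 := hsemi k hk ⟨z.2, by rw [← hwk, hz]⟩
  rw [hwk, hk1, Perm.one_apply]

lemma fiberPerm_mem_wreath {h : Perm X} (hh : h ∈ H) (y : Y) :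
    fiberPerm X Y h y ∈ wreath X Y H K := by
  refine ⟨1, K.one_mem, fiberPerm X Y h y, fun y' => ?_, by rw [map_one, one_mul]⟩
  by_cases hy : y' = y
  · subst hy
    exact ⟨h, hh, fiberPerm_apply_eq X Y h y'⟩
  · exact ⟨1, H.one_mem, fun x => fiberPerm_apply_ne X Y h y (x, y') hy⟩

lemma snd_eq_iff_exists_wreath_apply_eq [Nontrivial Y]
    (hsemi : ∀ k ∈ K, (∃ y : Y, k y = y) → k = 1) (hH : ∀ x x' : X, ∃ h ∈ H, h x = x')
    (p q : X × Y) :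
    p.2 = q.2 ↔ ∃ w ∈ wreath X Y H K, w p = q ∧ ∃ z, w z = z := by
  constructor
  · intro hpq
    obtain ⟨h, hh, hpq₁⟩ := hH p.1 q.1
    obtain ⟨y₁, hy₁⟩ := exists_ne p.2
    refine ⟨fiberPerm X Y h p.2, fiberPerm_mem_wreath hh p.2, ?_, (p.1, y₁),
      fiberPerm_apply_ne X Y h p.2 (p.1, y₁) hy₁⟩
    rw [fiberPerm_apply_eq, hpq₁, hpq]
  · rintro ⟨w, hw, rfl, z, hz⟩
    exact (wreath_apply_snd_of_apply_eq hsemi hw hz p).symm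

lemma apply_snd_eq_of_mem_normalizer_wreath
    (hsemi : ∀ k ∈ K, (∃ y : Y, k y = y) → k = 1) (hH : ∀ x x' : X, ∃ h ∈ H, h x = x')
    {α : Perm (X × Y)} (hα : α ∈ Subgroup.normalizer (wreath X Y H K : Set (Perm (X × Y))))
    {p q : X × Y} (hpq : p.2 = q.2) : (α p).2 = (α q).2 := by
  cases subsingleton_or_nontrivial Y
  · exact Subsingleton.elim _ _
  rw [snd_eq_iff_exists_wreath_apply_eq hsemi hH] at hpq ⊢
  obtain ⟨w, hw, rfl, z, hz⟩ := hpq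
  refine ⟨α * w * α⁻¹, (Subgroup.mem_normalizer_iff.mp hα w).mp hw, ?_, α z, ?_⟩ <;>
    simp [Perm.mul_apply, hz]

end Wreath

lemma exists_image_block_eq {X Y : Type*} {f : Perm (X × Y)}
    (hf : ∀ p q : X × Y, p.2 = q.2 → (f p).2 = (f q).2)
    (hf' : ∀ p q : X × Y, p.2 = q.2 → (f⁻¹ p).2 = (f⁻¹ q).2) (y : Y) :
    ∃ y', f '' block X Y y = block X Y y' := by
  cases isEmpty_or_nonempty X with
  | inl _ => exact ⟨y, by simp [Set.eq_empty_of_isEmpty]⟩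
  | inr hX =>
    obtain ⟨x₀⟩ := hX
    refine ⟨(f (x₀, y)).2, Set.ext fun q => ⟨?_, fun hq => ⟨f⁻¹ q, ?_, by simp⟩⟩⟩
    · rintro ⟨p, hp, rfl⟩
      exact hf p (x₀, y) hp
    · simpa [block] using hf' q (f (x₀, y)) hq

def SubMulAction.ofStableSets {G Z : Type*} [Group G] [MulAction G Z] (P : Set Z → Prop)
    (hP : ∀ (g : G) (S : Set Z), P S → P (g • S)) : SubMulAction G (Set Z) where
  carrier := {S | P S}
  smul_mem' := hP

lemma SubMulAction.mem_ker_toPermHom_ofStableSets_iff {G Z : Type*} [Group G] [MulAction G Z]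
    {P : Set Z → Prop} {hP : ∀ (g : G) (S : Set Z), P S → P (g • S)} (g : G) :
    g ∈ (MulAction.toPermHom G (ofStableSets P hP)).ker ↔ ∀ S, P S → g • S = S := by
  simp only [MonoidHom.mem_ker, Equiv.ext_iff, Subtype.ext_iff, Subtype.forall]
  rfl

/-- **Lemma C.** If `K ≤ Perm Y` is semiregular and `H ≤ Perm X` is transitive, then the
partition `𝒫 = {X_y : y ∈ Y}` of `Z = X × Y` is stable under the normalizer `N` of
`W = H ≀ K` in `Perm Z`; consequently there is a group homomorphism `Ω : N → Perm 𝒫`,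
`α ↦ (X_y ↦ α(X_y))`, whose kernel is `N ∩ S_Y(Z)`. -/
theorem normalizer_stabilizes_partition {X Y : Type*} (H : Subgroup (Perm X))
    (K : Subgroup (Perm Y))
    (hsemi : ∀ k ∈ K, (∃ y : Y, k y = y) → k = 1)
    (hH : ∀ x x' : X, ∃ h ∈ H, h x = x') :
    (∀ α ∈ (Subgroup.normalizer (wreath X Y H K : Set (Perm (X × Y)))), ∀ y : Y,
        ∃ y' : Y, α '' block X Y y = block X Y y') ∧
    ∃ Ω : (Subgroup.normalizer (wreath X Y H K : Set (Perm (X × Y)))) →* Perm {S : Set (X × Y) // ∃ y : Y, S = block X Y y},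
      (∀ (α : (Subgroup.normalizer (wreath X Y H K : Set (Perm (X × Y)))))
          (S : {S : Set (X × Y) // ∃ y : Y, S = block X Y y}),
        (Ω α S : Set (X × Y)) = (α : Perm (X × Y)) '' (S : Set (X × Y))) ∧
      (∀ α : (Subgroup.normalizer (wreath X Y H K : Set (Perm (X × Y)))),
        α ∈ Ω.ker ↔ (α : Perm (X × Y)) ∈ blockStab X Y) := by
  set N := Subgroup.normalizer (wreath X Y H K : Set (Perm (X × Y)))
  have hstab : ∀ α ∈ N, ∀ y : Y, ∃ y' : Y, α '' block X Y y = block X Y y' := fun α hα =>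
    exists_image_block_eq (fun _ _ => apply_snd_eq_of_mem_normalizer_wreath hsemi hH hα)
      (fun _ _ => apply_snd_eq_of_mem_normalizer_wreath hsemi hH (N.inv_mem hα))
  have hP : ∀ (α : N) (S : Set (X × Y)), (∃ y, S = block X Y y) → ∃ y, α • S = block X Y y := by
    rintro α _ ⟨y, rfl⟩
    exact hstab α α.2 y
  refine ⟨hstab, MulAction.toPermHom N (SubMulAction.ofStableSets _ hP), fun α S => rfl,
    fun α => (SubMulAction.mem_ker_toPermHom_ofStableSets_iff α).trans ?_⟩
  exact ⟨fun h y => h _ ⟨y, rfl⟩, by rintro h _ ⟨y, rfl⟩; exact h y⟩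
end

section
/- Assume Y = K acts on itself by the regular representation and H ≤ Perm(X) is transitive. Then the image of the block homomorphism Ω : N → Perm(𝒫) is the internal semidirect product of Ω(Γ(Aut(K))) and Ω(Λ(K)): that is, Ω(N) = Ω(Γ(Aut(K))) · Ω(Λ(K)), the subgroup Ω(Λ(K)) is normal in Ω(N), and Ω(Γ(Aut(K))) ∩ Ω(Λ(K)) = 1. -/
open Equiv

/-!
An element `α` of the normalizer `N` permutes the blocks, say `α '' X_k = X_{σ k}`. Every element
of `W` moves the blocks by a right translation of `K` (the base group fixes each block), and
`α Λ(c) α⁻¹ ∈ W`; hence `σ (m * c) = σ m * c'` for all `m`. So `γ m = σ m * (σ 1)⁻¹` is an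
automorphism of `K` and `Ω α = Ω (Γ γ) * Ω (Λ (γ⁻¹ (σ 1)))`. The same observation puts
`Ω (α Λ(c) α⁻¹)` in `Ω(Λ(K))`, and since `Γ γ` fixes the block `X_1` while `Λ(c)` sends it to
`X_c`, the two images meet trivially.
-/

lemma Subgroup.range_le_normalizer_of_conj_mem {G M : Type*} [Group G] [Group M]
    {H : Subgroup G} (f : M →* G) (hf : ∀ m, ∀ x ∈ H, f m * x * (f m)⁻¹ ∈ H) :
    f.range ≤ Subgroup.normalizer (H : Set G) := by
  rintro _ ⟨m, rfl⟩ x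
  refine ⟨hf m x, fun hx => ?_⟩
  simpa [mul_assoc] using hf m⁻¹ _ hx

lemma toPerm_conj_mem_rightRegular {K : Type*} [Group K] (γ : MulAut K) :
    ∀ k ∈ rightRegular K, MulAut.toPerm K γ * k * (MulAut.toPerm K γ)⁻¹ ∈ rightRegular K := by
  rintro _ ⟨c, rfl⟩
  refine ⟨γ c, Equiv.ext fun k => ?_⟩
  change k * γ c = γ (γ⁻¹ k * c)
  simp

section Wreath

variable {X Y : Type*} {H : Subgroup (Perm X)} {L : Subgroup (Perm Y)}

lemma lamHom_image_block (e : Perm Y) (y : Y) :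
    lamHom X Y e '' block X Y y = block X Y (e y) := by
  ext ⟨x, y'⟩
  simp [block, lamHom, eq_comm]

lemma baseGroup_le_blockStab : baseGroup X Y H ≤ blockStab X Y := by
  intro b hb y
  obtain ⟨h, -, hbh⟩ := hb y
  ext ⟨x, y'⟩
  constructor
  · rintro ⟨⟨x₀, _⟩, rfl : _ = y, hx⟩
    rw [hbh] at hx
    exact (congrArg Prod.snd hx).symm
  · rintro (rfl : y' = y)
    exact ⟨(h.symm x, y'), rfl, by simp [hbh]⟩

lemma lamHom_mem_wreath {k : Perm Y} (hk : k ∈ L) : lamHom X Y k ∈ wreath X Y H L :=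
  ⟨k, hk, 1, one_mem _, (mul_one _).symm⟩

lemma exists_image_block_of_mem_wreath {w : Perm (X × Y)} (hw : w ∈ wreath X Y H L) :
    ∃ k ∈ L, ∀ y, w '' block X Y y = block X Y (k y) := by
  obtain ⟨k, hk, b, hb, rfl⟩ := hw
  refine ⟨k, hk, fun y => ?_⟩
  rw [Perm.coe_mul, Set.image_comp, baseGroup_le_blockStab hb y, lamHom_image_block]

lemma lamHom_conj_mem_wreath {e : Perm Y} (he : ∀ k ∈ L, e * k * e⁻¹ ∈ L)
    {w : Perm (X × Y)} (hw : w ∈ wreath X Y H L) :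
    lamHom X Y e * w * (lamHom X Y e)⁻¹ ∈ wreath X Y H L := by
  obtain ⟨k, hk, b, hb, rfl⟩ := hw
  have hb' := lam_conj_base X Y e⁻¹ hb
  rw [map_inv, inv_inv] at hb'
  refine ⟨e * k * e⁻¹, he k hk, _, hb', ?_⟩
  rw [map_mul, map_mul, map_inv]
  group

end Wreath

section BlockAction

variable {X Y : Type*}

lemma block_injective [Nonempty X] : Function.Injective (block X Y) := by
  intro y y' h
  obtain ⟨x⟩ := ‹Nonempty X›
  have hx : (x, y) ∈ block X Y y' := h ▸ rfl
  exact hx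

noncomputable def blockEquiv (X Y : Type*) [Nonempty X] :
    Y ≃ {S : Set (X × Y) // ∃ y, S = block X Y y} :=
  Equiv.ofBijective (fun y => ⟨block X Y y, y, rfl⟩)
    ⟨fun _ _ h => block_injective (congrArg Subtype.val h),
      fun ⟨_, y, hy⟩ => ⟨y, Subtype.ext hy.symm⟩⟩

def IsInducedOnBlocks {G : Subgroup (Perm (X × Y))}
    (Ω : G →* Perm {S : Set (X × Y) // ∃ y, S = block X Y y}) : Prop :=
  ∀ α S, (Ω α S : Set (X × Y)) = (α : Perm (X × Y)) '' S

variable {G : Subgroup (Perm (X × Y))} {Ω : G →* Perm {S : Set (X × Y) // ∃ y, S = block X Y y}}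

lemma IsInducedOnBlocks.eq_iff (hΩ : IsInducedOnBlocks Ω) {α β : G} :
    Ω α = Ω β ↔ ∀ y, (α : Perm (X × Y)) '' block X Y y = (β : Perm (X × Y)) '' block X Y y := by
  constructor
  · intro h y
    rw [← hΩ α ⟨_, y, rfl⟩, ← hΩ β ⟨_, y, rfl⟩, h]
  · intro h
    refine Equiv.ext fun ⟨_, y, hy⟩ => Subtype.ext ?_
    subst hy
    rw [hΩ, hΩ, h]

lemma IsInducedOnBlocks.exists_perm_image_block [Nonempty X] (hΩ : IsInducedOnBlocks Ω)
    (α : G) :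
    ∃ σ : Perm Y, ∀ y, (α : Perm (X × Y)) '' block X Y y = block X Y (σ y) := by
  refine ⟨(blockEquiv X Y).trans ((Ω α).trans (blockEquiv X Y).symm), fun y => ?_⟩
  have h := congrArg Subtype.val ((blockEquiv X Y).apply_symm_apply (Ω α (blockEquiv X Y y)))
  rw [Equiv.trans_apply, Equiv.trans_apply]
  exact (hΩ α _).symm.trans h.symm

end BlockAction

section Normalizer

variable {X Y : Type*} {H : Subgroup (Perm X)} {L : Subgroup (Perm Y)}
  {Ω : Subgroup.normalizer (wreath X Y H L : Set (Perm (X × Y))) →*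
    Perm {S : Set (X × Y) // ∃ y, S = block X Y y}}

lemma lamHom_mem_normalizer_wreath {k : Perm Y} (hk : k ∈ L) :
    lamHom X Y k ∈ Subgroup.normalizer (wreath X Y H L : Set (Perm (X × Y))) :=
  Subgroup.le_normalizer (lamHom_mem_wreath hk)

lemma IsInducedOnBlocks.mem_map_lamHom_of_mem_wreath (hΩ : IsInducedOnBlocks Ω)
    {n : Subgroup.normalizer (wreath X Y H L : Set (Perm (X × Y)))}
    (hn : (n : Perm (X × Y)) ∈ wreath X Y H L) :
    Ω n ∈ Subgroup.map Ω (Subgroup.comap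
      (Subgroup.normalizer (wreath X Y H L : Set (Perm (X × Y)))).subtype
      (Subgroup.map (lamHom X Y) L)) := by
  obtain ⟨k, hk, hn_block⟩ := exists_image_block_of_mem_wreath hn
  refine ⟨⟨lamHom X Y k, lamHom_mem_normalizer_wreath hk⟩, ⟨k, hk, rfl⟩, ?_⟩
  rw [hΩ.eq_iff]
  intro y
  rw [hn_block, lamHom_image_block]

end Normalizer

lemma exists_mulAut_of_map_mul_right {K : Type*} [Group K] (σ : Perm K)
    (hσ : ∀ c, ∃ c', ∀ m, σ (m * c) = σ m * c') : ∃ γ : MulAut K, ∀ m, σ m = γ m * σ 1 := by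
  have hmul : ∀ m c, σ (m * c) = σ m * ((σ 1)⁻¹ * σ c) := by
    intro m c
    obtain ⟨c', hc'⟩ := hσ c
    have h1 := hc' 1
    rw [one_mul] at h1
    rw [hc' m, h1]
    group
  let γ : MulAut K :=
    { σ.trans (Equiv.mulRight (σ 1)⁻¹) with
      map_mul' := fun m c => by
        simp only [Equiv.toFun_as_coe, Equiv.trans_apply, Equiv.coe_mulRight, hmul]
        group }
  exact ⟨γ, fun m => by simp [γ]⟩

section Regular

variable {X K : Type*} [Group K] {H : Subgroup (Perm X)}
  {Ω : Subgroup.normalizer (wreath X K H (rightRegular K) : Set (Perm (X × K))) →*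
    Perm {S : Set (X × K) // ∃ k, S = block X K k}}

lemma gammaHom_image_block (γ : MulAut K) (k : K) :
    gammaHom X K γ '' block X K k = block X K (γ k) :=
  lamHom_image_block (MulAut.toPerm K γ) k

lemma range_gammaHom_le_normalizer_wreath :
    (gammaHom X K).range ≤
      Subgroup.normalizer (wreath X K H (rightRegular K) : Set (Perm (X × K))) :=
  Subgroup.range_le_normalizer_of_conj_mem _ fun γ _ hw =>
    lamHom_conj_mem_wreath (toPerm_conj_mem_rightRegular γ) hw

lemma IsInducedOnBlocks.exists_mulAut_image_block [Nonempty X] (hΩ : IsInducedOnBlocks Ω)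
    (α : Subgroup.normalizer (wreath X K H (rightRegular K) : Set (Perm (X × K)))) :
    ∃ (γ : MulAut K) (s : K), ∀ k,
      (α : Perm (X × K)) '' block X K k = block X K (γ k * s) := by
  obtain ⟨σ, hσ⟩ := hΩ.exists_perm_image_block α
  suffices hσ_mul : ∀ c, ∃ c', ∀ m, σ (m * c) = σ m * c' by
    obtain ⟨γ, hγ⟩ := exists_mulAut_of_map_mul_right σ hσ_mul
    exact ⟨γ, σ 1, fun k => by rw [hσ, hγ]⟩
  intro c
  have hw : (α : Perm (X × K)) * lamHom X K (Equiv.mulRight c) * (α : Perm (X × K))⁻¹ ∈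
      wreath X K H (rightRegular K) :=
    (Subgroup.mem_normalizer_iff.mp α.2 _).mp (lamHom_mem_wreath ⟨c, rfl⟩)
  obtain ⟨_, ⟨c', rfl⟩, hw_block⟩ := exists_image_block_of_mem_wreath hw
  refine ⟨c', fun m => block_injective (X := X) ?_⟩
  calc block X K (σ (m * c))
      = (α : Perm (X × K)) '' (lamHom X K (Equiv.mulRight c) '' block X K m) := by
        rw [lamHom_image_block, hσ]; rfl
    _ = ((α : Perm (X × K)) * lamHom X K (Equiv.mulRight c) * (α : Perm (X × K))⁻¹) ''
          ((α : Perm (X × K)) '' block X K m) := by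
        simp only [Perm.coe_mul, Set.image_comp, Perm.inv_def, Equiv.symm_image_image]
    _ = block X K (σ m * c') := by rw [hσ, hw_block]; rfl

lemma IsInducedOnBlocks.exists_eq_gammaHom_mul_lamHom (hΩ : IsInducedOnBlocks Ω)
    (α : Subgroup.normalizer (wreath X K H (rightRegular K) : Set (Perm (X × K)))) :
    ∃ (γ : MulAut K) (c : K), Ω α =
      Ω ⟨gammaHom X K γ, range_gammaHom_le_normalizer_wreath (MonoidHom.mem_range.2 ⟨γ, rfl⟩)⟩ *
        Ω ⟨lamHom X K (Equiv.mulRight c), lamHom_mem_normalizer_wreath ⟨c, rfl⟩⟩ := by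
  rcases isEmpty_or_nonempty X with _ | _
  · refine ⟨1, 1, ?_⟩
    rw [← map_mul, hΩ.eq_iff]
    exact fun _ => Subsingleton.elim _ _
  · obtain ⟨γ, s, hγ⟩ := hΩ.exists_mulAut_image_block α
    refine ⟨γ, γ⁻¹ s, ?_⟩
    rw [← map_mul, hΩ.eq_iff]
    intro k
    rw [hγ, Subgroup.coe_mul, Perm.coe_mul, Set.image_comp, lamHom_image_block, Subgroup.coe_mk,
      gammaHom_image_block]
    simp

lemma IsInducedOnBlocks.lamHom_eq_one_of_eq_gammaHom (hΩ : IsInducedOnBlocks Ω) {γ : MulAut K}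
    {c : K}
    (hγ : gammaHom X K γ ∈
      Subgroup.normalizer (wreath X K H (rightRegular K) : Set (Perm (X × K))))
    (hc : lamHom X K (Equiv.mulRight c) ∈
      Subgroup.normalizer (wreath X K H (rightRegular K) : Set (Perm (X × K))))
    (h : Ω ⟨lamHom X K (Equiv.mulRight c), hc⟩ = Ω ⟨gammaHom X K γ, hγ⟩) :
    Ω ⟨lamHom X K (Equiv.mulRight c), hc⟩ = 1 := by
  rw [← map_one Ω, hΩ.eq_iff]
  intro k
  rcases isEmpty_or_nonempty X with _ | _
  · exact Subsingleton.elim _ _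
  · have hc_one : c = 1 := by
      have h1 := hΩ.eq_iff.1 h 1
      rw [Subgroup.coe_mk, Subgroup.coe_mk, gammaHom_image_block, lamHom_image_block] at h1
      simpa using block_injective h1
    subst hc_one
    simp

end Regular

theorem omega_image_semidirect_general {X : Type*} (K : Type*) [Group K] (H : Subgroup (Perm X))
    (Ω : (Subgroup.normalizer (wreath X K H (rightRegular K) : Set (Perm (X × K)))) →*
      Perm {S : Set (X × K) // ∃ k : K, S = block X K k})
    (hΩ : ∀ (α : (Subgroup.normalizer (wreath X K H (rightRegular K) : Set (Perm (X × K)))))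
        (S : {S : Set (X × K) // ∃ k : K, S = block X K k}),
      (Ω α S : Set (X × K)) = (α : Perm (X × K)) '' (S : Set (X × K))) :
    (gammaHom X K).range ≤ (Subgroup.normalizer (wreath X K H (rightRegular K) : Set (Perm (X × K)))) ∧
    Subgroup.map (lamHom X K) (rightRegular K) ≤ (Subgroup.normalizer (wreath X K H (rightRegular K) : Set (Perm (X × K)))) ∧
    (∀ q ∈ Ω.range,
      ∃ a ∈ Subgroup.map Ω (Subgroup.comap (Subgroup.normalizer (wreath X K H (rightRegular K) : Set (Perm (X × K)))).subtype
          (gammaHom X K).range),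
      ∃ l ∈ Subgroup.map Ω (Subgroup.comap (Subgroup.normalizer (wreath X K H (rightRegular K) : Set (Perm (X × K)))).subtype
          (Subgroup.map (lamHom X K) (rightRegular K))),
        q = a * l) ∧
    (∀ q ∈ Ω.range,
      ∀ l ∈ Subgroup.map Ω (Subgroup.comap (Subgroup.normalizer (wreath X K H (rightRegular K) : Set (Perm (X × K)))).subtype
          (Subgroup.map (lamHom X K) (rightRegular K))),
        q * l * q⁻¹ ∈ Subgroup.map Ω
          (Subgroup.comap (Subgroup.normalizer (wreath X K H (rightRegular K) : Set (Perm (X × K)))).subtype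
            (Subgroup.map (lamHom X K) (rightRegular K)))) ∧
    Subgroup.map Ω (Subgroup.comap (Subgroup.normalizer (wreath X K H (rightRegular K) : Set (Perm (X × K)))).subtype
        (gammaHom X K).range) ⊓
      Subgroup.map Ω (Subgroup.comap (Subgroup.normalizer (wreath X K H (rightRegular K) : Set (Perm (X × K)))).subtype
        (Subgroup.map (lamHom X K) (rightRegular K))) = ⊥ := by
  have hΩ' : IsInducedOnBlocks Ω := hΩ
  refine ⟨range_gammaHom_le_normalizer_wreath, ?_, ?_, ?_, ?_⟩
  · rintro _ ⟨_, hk, rfl⟩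
    exact lamHom_mem_normalizer_wreath hk
  · rintro _ ⟨α, rfl⟩
    obtain ⟨γ, c, h⟩ := hΩ'.exists_eq_gammaHom_mul_lamHom α
    exact ⟨_, ⟨_, ⟨γ, rfl⟩, rfl⟩, _, ⟨_, ⟨_, ⟨c, rfl⟩, rfl⟩, rfl⟩, h⟩
  · rintro _ ⟨α, rfl⟩ _ ⟨⟨_, _⟩, ⟨k, hk, rfl⟩, rfl⟩
    rw [← map_inv, ← map_mul, ← map_mul]
    exact hΩ'.mem_map_lamHom_of_mem_wreath
      ((Subgroup.mem_normalizer_iff.mp α.2 _).mp (lamHom_mem_wreath hk))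
  · rw [eq_bot_iff]
    rintro _ ⟨⟨⟨_, hγN⟩, ⟨γ, rfl⟩, rfl⟩, ⟨⟨_, hcN⟩, ⟨_, ⟨c, rfl⟩, rfl⟩, h⟩⟩
    exact Subgroup.mem_bot.2 (h ▸ hΩ'.lamHom_eq_one_of_eq_gammaHom hγN hcN h)

/-- **Lemma E.** With `Y = K` regular and `H ≤ Perm X` transitive, the image of the block
homomorphism `Ω : N → Perm 𝒫` is the internal semidirect product of `Ω(Γ(Aut K))` and
`Ω(Λ(K))`. -/
theorem omega_image_semidirect {X : Type*} (K : Type*) [Group K] (H : Subgroup (Perm X))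
    (hH : ∀ x x' : X, ∃ h ∈ H, h x = x')
    (Ω : (Subgroup.normalizer (wreath X K H (rightRegular K) : Set (Perm (X × K)))) →*
      Perm {S : Set (X × K) // ∃ k : K, S = block X K k})
    (hΩ : ∀ (α : (Subgroup.normalizer (wreath X K H (rightRegular K) : Set (Perm (X × K)))))
        (S : {S : Set (X × K) // ∃ k : K, S = block X K k}),
      (Ω α S : Set (X × K)) = (α : Perm (X × K)) '' (S : Set (X × K))) :
    (gammaHom X K).range ≤ (Subgroup.normalizer (wreath X K H (rightRegular K) : Set (Perm (X × K)))) ∧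
    Subgroup.map (lamHom X K) (rightRegular K) ≤ (Subgroup.normalizer (wreath X K H (rightRegular K) : Set (Perm (X × K)))) ∧
    (∀ q ∈ Ω.range,
      ∃ a ∈ Subgroup.map Ω (Subgroup.comap (Subgroup.normalizer (wreath X K H (rightRegular K) : Set (Perm (X × K)))).subtype
          (gammaHom X K).range),
      ∃ l ∈ Subgroup.map Ω (Subgroup.comap (Subgroup.normalizer (wreath X K H (rightRegular K) : Set (Perm (X × K)))).subtype
          (Subgroup.map (lamHom X K) (rightRegular K))),
        q = a * l) ∧
    (∀ q ∈ Ω.range,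
      ∀ l ∈ Subgroup.map Ω (Subgroup.comap (Subgroup.normalizer (wreath X K H (rightRegular K) : Set (Perm (X × K)))).subtype
          (Subgroup.map (lamHom X K) (rightRegular K))),
        q * l * q⁻¹ ∈ Subgroup.map Ω
          (Subgroup.comap (Subgroup.normalizer (wreath X K H (rightRegular K) : Set (Perm (X × K)))).subtype
            (Subgroup.map (lamHom X K) (rightRegular K)))) ∧
    Subgroup.map Ω (Subgroup.comap (Subgroup.normalizer (wreath X K H (rightRegular K) : Set (Perm (X × K)))).subtype
        (gammaHom X K).range) ⊓
      Subgroup.map Ω (Subgroup.comap (Subgroup.normalizer (wreath X K H (rightRegular K) : Set (Perm (X × K)))).subtype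
        (Subgroup.map (lamHom X K) (rightRegular K))) = ⊥ :=
  omega_image_semidirect_general K H Ω hΩ
end
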